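/- For every r ∈ [0,π) and every k ≥ 0, the set W_{2k+1}(r) is closed in VRm(S¹;r). -/

import Mathlib

open MeasureTheory Metric Filter
open scoped unitInterval

noncomputable section

/-- The circle of circumference `2π`, modeled as `ℝ/2πℤ` with the quotient (geodesic) metric. -/
abbrev S1 : Type := AddCircle (2 * Real.pi)

instance : Fact (0 < 2 * Real.pi) := ⟨by positivity⟩

/-- The set of atoms of a probability measure. -/
def suppSet {X : Type*} [MeasurableSpace X] (μ : ProbabilityMeasure X) : Set X :=
  {x | μ {x} ≠ 0}

/-- Finitely supported Borel probability measures, topologized as a subspace of the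
space of Borel probability measures with the topology of weak convergence. -/
abbrev Pfin (X : Type*) [MeasurableSpace X] : Type _ :=
  {μ : ProbabilityMeasure X // ∃ S : Finset X, μ (↑S : Set X) = 1}

/-- The Vietoris–Rips metric thickening of the circle at scale `r`:
finitely supported probability measures whose support has diameter at most `r`. -/
def VRm (r : ℝ) : Set (Pfin S1) :=
  {μ | Metric.diam (suppSet μ.1) ≤ r}


/-- A closed arc of the circle: the image of a closed interval `[a,b]` (with
`a ≤ b < a + 2π`, so possibly a single point) under the projection `ℝ → ℝ/2πℤ`. -/
def IsClosedArc (A : Set S1) : Prop :=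
  ∃ a b : ℝ, a ≤ b ∧ b < a + 2 * Real.pi ∧ A = (fun t : ℝ => (t : S1)) '' Set.Icc a b

/-- A point `x` is excluded by `Θ` (at scale `r`) if its distance from some point
of `Θ` exceeds `r`. -/
def ExcludedBy (r : ℝ) (Θ : Set S1) (x : S1) : Prop :=
  ∃ θ ∈ Θ, r < dist θ x

/-- A `(Θ,r)`-arc: a closed arc, maximal among closed arcs that contain at least one
point of `Θ` and contain no point excluded by `Θ`. -/
def IsArc (r : ℝ) (Θ : Set S1) (A : Set S1) : Prop :=
  IsClosedArc A ∧ (A ∩ Θ).Nonempty ∧ (∀ x ∈ A, ¬ ExcludedBy r Θ x) ∧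
    ∀ B : Set S1, IsClosedArc B → (B ∩ Θ).Nonempty → (∀ x ∈ B, ¬ ExcludedBy r Θ x) →
      A ⊆ B → A = B

/-- `arcs_r(Θ)`: the number of `(Θ,r)`-arcs. -/
def arcsCount (r : ℝ) (Θ : Set S1) : ℕ :=
  Set.ncard {A : Set S1 | IsArc r Θ A}

/-- `arcs_r(μ)` for a finitely supported measure: the number of `(supp μ, r)`-arcs. -/
def arcsCountM (r : ℝ) (μ : Pfin S1) : ℕ :=
  arcsCount r (suppSet μ.1)

/-- `V_{2k+1}(r)`: measures in the metric thickening with exactly `2k+1` arcs. -/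
def V (r : ℝ) (k : ℕ) : Set (Pfin S1) :=
  {μ ∈ VRm r | arcsCountM r μ = 2 * k + 1}

/-- `W_{2k+1}(r)`: measures in the metric thickening with at most `2k+1` arcs. -/
def W (r : ℝ) (k : ℕ) : Set (Pfin S1) :=
  {μ ∈ VRm r | arcsCountM r μ ≤ 2 * k + 1}

/-!
The number of arcs is lower semicontinuous on `VRm(S¹;r)`, so its sublevel sets `W_{2k+1}(r)` are
closed. Once a point `[z]` excluded by `Θ` is fixed, lifting to the window `[z, z + 2π]` turns the
`(Θ,r)`-arcs into the images of the connected components of the set of lifted allowed points; so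
distinct arcs are told apart by an excluded point lying between lifts of their points of `Θ`.
For a finitely supported measure near `μ₀`, finitely many such excluded points stay excluded and
each arc of `μ₀` keeps an atom nearby, on the same side of all of them (portmanteau: mass cannot
leave an open set in the limit), so the nearby measure has at least as many arcs.
-/

namespace VRArcs

open Set Topology

variable {r : ℝ} {Θ : Set S1} {z : ℝ}

lemma coe_mem_image_iff {s : Set ℝ} (hs : s ⊆ Ico z (z + 2 * Real.pi)) {t : ℝ}
    (ht : t ∈ Ico z (z + 2 * Real.pi)) : (t : S1) ∈ ((↑) : ℝ → S1) '' s ↔ t ∈ s := by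
  refine ⟨fun ⟨t', ht's, hcoe⟩ => ?_, mem_image_of_mem _⟩
  rwa [← (AddCircle.coe_eq_coe_iff_of_mem_Ico (hs ht's) ht).1 hcoe]

lemma exists_lift_mem_Ico (x : S1) : ∃ t ∈ Ico z (z + 2 * Real.pi), (t : S1) = x :=
  ⟨_, (AddCircle.equivIco (2 * Real.pi) z x).2, AddCircle.coe_equivIco⟩

lemma image_coe_Icc_add_of_coe_eq_zero {c : ℝ} (hc : (c : S1) = 0) (a b : ℝ) :
    ((↑) : ℝ → S1) '' Icc (a + c) (b + c) = (↑) '' Icc a b := by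
  rw [← image_add_const_Icc, image_image]
  simp only [AddCircle.coe_add, hc, add_zero]

lemma IsClosedArc.exists_eq_image_Icc {A : Set S1} (hA : IsClosedArc A) (hz : (z : S1) ∉ A) :
    ∃ a b, z < a ∧ a ≤ b ∧ b < z + 2 * Real.pi ∧ A = ((↑) : ℝ → S1) '' Icc a b := by
  obtain ⟨a, b, hab, hba, rfl⟩ := hA
  obtain ⟨a', ha', hcoe⟩ := exists_lift_mem_Ico (z := z) (a : S1)
  have hc : ((a' - a : ℝ) : S1) = 0 := by rw [AddCircle.coe_sub, hcoe, sub_self]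
  have hshift := image_coe_Icc_add_of_coe_eq_zero hc a b
  rw [add_sub_cancel] at hshift
  refine ⟨a', b + (a' - a), lt_of_le_of_ne ha'.1 ?_, by linarith, ?_, hshift.symm⟩
  · rintro rfl
    exact hz ⟨a, left_mem_Icc.2 hab, hcoe.symm⟩
  · by_contra! hb
    refine hz ⟨z + 2 * Real.pi - (a' - a), ⟨by linarith [ha'.2], by linarith⟩, ?_⟩
    change ((z + 2 * Real.pi - (a' - a) : ℝ) : S1) = z
    rw [AddCircle.coe_sub, AddCircle.coe_add_period, hc, sub_zero]

lemma _root_.IsClosed.connectedComponentIn {X : Type*} [TopologicalSpace X] {F : Set X}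
    (hF : IsClosed F) (x : X) : IsClosed (connectedComponentIn F x) := by
  by_cases hx : x ∈ F
  · exact isClosed_of_closure_subset <| isPreconnected_connectedComponentIn.closure
      |>.subset_connectedComponentIn (subset_closure (mem_connectedComponentIn hx))
        (closure_minimal (connectedComponentIn_subset F x) hF)
  · simp [connectedComponentIn_eq_empty hx]

def allowed (r : ℝ) (Θ : Set S1) : Set S1 := {x | ¬ ExcludedBy r Θ x}

lemma isClosed_allowed : IsClosed (allowed r Θ) := by
  have : allowed r Θ = ⋂ θ ∈ Θ, closedBall θ r := by
    ext x
    simp [allowed, ExcludedBy, dist_comm]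
  rw [this]
  exact isClosed_biInter fun _ _ => isClosed_closedBall

lemma subset_allowed (hdiam : ∀ x ∈ Θ, ∀ y ∈ Θ, dist x y ≤ r) : Θ ⊆ allowed r Θ :=
  fun y hy ⟨x, hx, hxy⟩ => (hdiam x hx y hy).not_gt hxy

def liftAllowed (r : ℝ) (Θ : Set S1) (z : ℝ) : Set ℝ :=
  Icc z (z + 2 * Real.pi) ∩ (↑) ⁻¹' allowed r Θ

lemma isClosed_liftAllowed : IsClosed (liftAllowed r Θ z) :=
  isClosed_Icc.inter (isClosed_allowed.preimage (AddCircle.continuous_mk' _))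

lemma image_connectedComponentIn_subset_allowed (p : ℝ) :
    (↑) '' connectedComponentIn (liftAllowed r Θ z) p ⊆ allowed r Θ :=
  image_subset_iff.2 ((connectedComponentIn_subset _ _).trans inter_subset_right)

lemma IsArc.exists_excluded {A : Set S1} (hA : IsArc r Θ A) : ∃ z : ℝ, ExcludedBy r Θ z := by
  by_contra! h
  obtain ⟨⟨a, b, hab, hba, rfl⟩, hAΘ, -, hmax⟩ := hA
  set m := (b + (a + 2 * Real.pi)) / 2 with hm
  have hbm : b < m := by linarith
  have hsub : ((↑) : ℝ → S1) '' Icc a b ⊆ (↑) '' Icc a m :=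
    image_mono (Icc_subset_Icc_right hbm.le)
  have heq := hmax _ ⟨a, m, hab.trans hbm.le, by linarith, rfl⟩
    (hAΘ.mono (inter_subset_inter_left _ hsub)) (by rintro _ ⟨t, -, rfl⟩; exact h t) hsub
  have hmA : (m : S1) ∈ ((↑) : ℝ → S1) '' Icc a b :=
    heq ▸ mem_image_of_mem _ (right_mem_Icc.2 (hab.trans hbm.le))
  have := (coe_mem_image_iff (Icc_subset_Ico_right hba) ⟨hab.trans hbm.le, by linarith⟩).1 hmA
  exact hbm.not_ge this.2

lemma mem_uIcc_of_le_iff_le {s u u' t t' : ℝ} (hs : s ∈ uIcc u u') (hsu : s ≠ u) (hsu' : s ≠ u')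
    (ht : s ≤ t ↔ s ≤ u) (ht' : s ≤ t' ↔ s ≤ u') : s ∈ uIcc t t' := by
  rw [mem_uIcc] at hs ⊢
  rcases hs with ⟨h, h'⟩ | ⟨h, h'⟩
  · exact Or.inl ⟨(not_le.1 (ht.not.2 (not_le.2 (h.lt_of_ne hsu.symm)))).le, ht'.2 h'⟩
  · exact Or.inr ⟨(not_le.1 (ht'.not.2 (not_le.2 (h.lt_of_ne hsu'.symm)))).le, ht.2 h'⟩

lemma eventually_forall_le_iff_le {F : Set ℝ} (hF : F.Finite) {u : ℝ} (hu : u ∉ F) :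
    ∀ᶠ t in 𝓝 u, ∀ f ∈ F, f ≤ t ↔ f ≤ u := by
  refine (eventually_all_finite hF).2 fun f hf => ?_
  rcases (ne_of_mem_of_not_mem hf hu).lt_or_gt with h | h
  · filter_upwards [eventually_gt_nhds h] with t ht
    simp only [ht.le, h.le]
  · filter_upwards [eventually_lt_nhds h] with t ht
    simp only [not_le.2 ht, not_le.2 h]

section

variable (hz : ExcludedBy r Θ z)
include hz

lemma liftAllowed_subset_Ioo : liftAllowed r Θ z ⊆ Ioo z (z + 2 * Real.pi) := by
  rintro t ⟨ht, hta⟩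
  refine ⟨lt_of_le_of_ne ht.1 ?_, lt_of_le_of_ne ht.2 ?_⟩ <;> rintro rfl
  · exact hta hz
  · exact hta (by rwa [AddCircle.coe_add_period])

lemma connectedComponentIn_liftAllowed_eq_Icc {p : ℝ} (hp : p ∈ liftAllowed r Θ z) :
    ∃ a b, z < a ∧ a ≤ b ∧ b < z + 2 * Real.pi ∧
      connectedComponentIn (liftAllowed r Θ z) p = Icc a b := by
  set C := connectedComponentIn (liftAllowed r Θ z) p
  have hsub : C ⊆ Ioo z (z + 2 * Real.pi) :=
    (connectedComponentIn_subset _ _).trans (liftAllowed_subset_Ioo hz)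
  have hC : C = Icc (sInf C) (sSup C) := eq_Icc_of_connected_compact
    (isConnected_connectedComponentIn_iff.2 hp) <| isCompact_Icc.of_isClosed_subset
      (isClosed_liftAllowed.connectedComponentIn p) (hsub.trans Ioo_subset_Icc_self)
  have hle : sInf C ≤ sSup C := nonempty_Icc.1 (hC ▸ ⟨p, mem_connectedComponentIn hp⟩)
  exact ⟨sInf C, sSup C, (hsub (hC.ge (left_mem_Icc.2 hle))).1, hle,
    (hsub (hC.ge (right_mem_Icc.2 hle))).2, hC⟩

lemma isClosedArc_image_connectedComponentIn {p : ℝ} (hp : p ∈ liftAllowed r Θ z) :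
    IsClosedArc ((↑) '' connectedComponentIn (liftAllowed r Θ z) p) := by
  obtain ⟨a, b, hza, hab, hbz, hC⟩ := connectedComponentIn_liftAllowed_eq_Icc hz hp
  exact ⟨a, b, hab, by linarith, by rw [hC]⟩

lemma subset_image_connectedComponentIn {B : Set S1} (hB : IsClosedArc B)
    (hBa : B ⊆ allowed r Θ) {p : ℝ} (hp : p ∈ Ico z (z + 2 * Real.pi)) (hpB : (p : S1) ∈ B) :
    B ⊆ (↑) '' connectedComponentIn (liftAllowed r Θ z) p := by
  obtain ⟨a, b, hza, hab, hbz, rfl⟩ := IsClosedArc.exists_eq_image_Icc hB fun h => hBa h hz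
  have hIcc : Icc a b ⊆ Ico z (z + 2 * Real.pi) := Icc_subset_Ico hza.le hbz
  have hsub : Icc a b ⊆ liftAllowed r Θ z := fun t ht =>
    ⟨Ico_subset_Icc_self (hIcc ht), hBa (mem_image_of_mem _ ht)⟩
  exact image_mono <| isPreconnected_Icc.subset_connectedComponentIn
    ((coe_mem_image_iff hIcc hp).1 hpB) hsub

lemma isArc_image_connectedComponentIn {p : ℝ} (hp : p ∈ liftAllowed r Θ z)
    (hpΘ : (p : S1) ∈ Θ) : IsArc r Θ ((↑) '' connectedComponentIn (liftAllowed r Θ z) p) := by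
  have hpC := mem_image_of_mem ((↑) : ℝ → S1) (mem_connectedComponentIn hp)
  refine ⟨isClosedArc_image_connectedComponentIn hz hp, ⟨p, hpC, hpΘ⟩,
    image_connectedComponentIn_subset_allowed p, fun B hB _ hBa hCB => hCB.antisymm ?_⟩
  exact subset_image_connectedComponentIn hz hB hBa
    (Ioo_subset_Ico_self (liftAllowed_subset_Ioo hz hp)) (hCB hpC)

lemma IsArc.eq_image_connectedComponentIn {A : Set S1} (hA : IsArc r Θ A) {t : ℝ}
    (ht : t ∈ Ico z (z + 2 * Real.pi)) (htA : (t : S1) ∈ A) :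
    A = (↑) '' connectedComponentIn (liftAllowed r Θ z) t := by
  have htl : t ∈ liftAllowed r Θ z := ⟨Ico_subset_Icc_self ht, hA.2.2.1 _ htA⟩
  have hAC := subset_image_connectedComponentIn hz hA.1 hA.2.2.1 ht htA
  exact hA.2.2.2 _ (isClosedArc_image_connectedComponentIn hz htl)
    (hA.2.1.mono (inter_subset_inter_left _ hAC)) (image_connectedComponentIn_subset_allowed t) hAC

lemma IsArc.exists_excluded_mem_uIcc {A A' : Set S1} (hA : IsArc r Θ A) (hA' : IsArc r Θ A')
    (hne : A ≠ A') {t t' : ℝ} (ht : t ∈ Ico z (z + 2 * Real.pi))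
    (ht' : t' ∈ Ico z (z + 2 * Real.pi)) (htA : (t : S1) ∈ A) (ht'A' : (t' : S1) ∈ A') :
    ∃ s ∈ uIcc t t', ExcludedBy r Θ s := by
  by_contra! hs
  refine hne ?_
  have hsub : uIcc t t' ⊆ liftAllowed r Θ z := fun s hs' =>
    ⟨ordConnected_Icc.uIcc_subset (Ico_subset_Icc_self ht) (Ico_subset_Icc_self ht') hs', hs s hs'⟩
  have ht'C : t' ∈ connectedComponentIn (liftAllowed r Θ z) t :=
    isPreconnected_uIcc.subset_connectedComponentIn left_mem_uIcc hsub right_mem_uIcc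
  rw [IsArc.eq_image_connectedComponentIn hz hA ht htA,
    IsArc.eq_image_connectedComponentIn hz hA' ht' ht'A',
    connectedComponentIn_eq ht'C]

lemma finite_setOf_isArc (hΘ : Θ.Finite) : {A | IsArc r Θ A}.Finite := by
  refine Finite.of_finite_image (f := (· ∩ Θ)) (hΘ.finite_subsets.subset ?_)
    fun A hA A' hA' hAA' => ?_
  · rintro _ ⟨A, -, rfl⟩
    exact inter_subset_right
  · obtain ⟨w, hwA, hwΘ⟩ := hA.2.1
    obtain ⟨t, ht, rfl⟩ := exists_lift_mem_Ico (z := z) w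
    have hwA' : (t : S1) ∈ A' ∩ Θ := by
      change A ∩ Θ = A' ∩ Θ at hAA'
      exact hAA' ▸ ⟨hwA, hwΘ⟩
    rw [IsArc.eq_image_connectedComponentIn hz hA ht hwA,
      IsArc.eq_image_connectedComponentIn hz hA' ht hwA'.1]

lemma card_le_arcsCount (hΘ : Θ.Finite) (hdiam : ∀ x ∈ Θ, ∀ y ∈ Θ, dist x y ≤ r) {ι : Type*}
    (t : ι → ℝ) (ht : ∀ i, t i ∈ Ico z (z + 2 * Real.pi)) (htΘ : ∀ i, (t i : S1) ∈ Θ)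
    (hsep : ∀ i j, i ≠ j → ∃ s ∈ uIcc (t i) (t j), ExcludedBy r Θ s) :
    Nat.card ι ≤ arcsCount r Θ := by
  have htl : ∀ i, t i ∈ liftAllowed r Θ z := fun i =>
    ⟨Ico_subset_Icc_self (ht i), subset_allowed hdiam (htΘ i)⟩
  let B : ι → {A | IsArc r Θ A} := fun i =>
    ⟨_, isArc_image_connectedComponentIn hz (htl i) (htΘ i)⟩
  have hB : Function.Injective B := by
    intro i j hij
    by_contra hne
    obtain ⟨s, hs, hsex⟩ := hsep i j hne
    have hCi : connectedComponentIn (liftAllowed r Θ z) (t i) ⊆ Ico z (z + 2 * Real.pi) :=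
      (connectedComponentIn_subset _ _).trans <|
        (liftAllowed_subset_Ioo hz).trans Ioo_subset_Ico_self
    have htj : (t j : S1) ∈ (B j : Set S1) := mem_image_of_mem _ (mem_connectedComponentIn (htl j))
    rw [← hij] at htj
    replace htj := (coe_mem_image_iff hCi (ht j)).1 htj
    have hsC := isPreconnected_connectedComponentIn.ordConnected.uIcc_subset
      (mem_connectedComponentIn (htl i)) htj hs
    exact (connectedComponentIn_subset _ _ hsC).2 hsex
  have := (finite_setOf_isArc hz hΘ).to_subtype
  exact (Nat.card_le_card_of_injective B hB).trans (Nat.card_coe_set_eq _).le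

lemma exists_finite_separating (hΘ : Θ.Finite) {u : {A // IsArc r Θ A} → ℝ}
    (hu : ∀ A, u A ∈ Ico z (z + 2 * Real.pi)) (huA : ∀ A, (u A : S1) ∈ A.1) :
    ∃ F : Set ℝ, F.Finite ∧ z ∈ F ∧ z + 2 * Real.pi ∈ F ∧ (∀ f ∈ F, ExcludedBy r Θ f) ∧
      ∀ A A', A ≠ A' → ∃ s ∈ F, s ∈ uIcc (u A) (u A') := by
  have hsep : ∀ A A' : {A // IsArc r Θ A},
      ∃ s : ℝ, ExcludedBy r Θ s ∧ (A ≠ A' → s ∈ uIcc (u A) (u A')) := by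
    intro A A'
    by_cases hAA' : A = A'
    · exact ⟨z, hz, fun h => (h hAA').elim⟩
    · obtain ⟨s, hs, hsex⟩ := IsArc.exists_excluded_mem_uIcc hz A.2 A'.2
        (Subtype.coe_ne_coe.2 hAA') (hu A) (hu A') (huA A) (huA A')
      exact ⟨s, hsex, fun _ => hs⟩
  choose sep hsepex hsep using hsep
  have : Finite {A // IsArc r Θ A} := (finite_setOf_isArc hz hΘ).to_subtype
  refine ⟨insert z (insert (z + 2 * Real.pi) (range (Function.uncurry sep))),
    ((finite_range _).insert _).insert _, mem_insert _ _, mem_insert_of_mem _ (mem_insert _ _), ?_,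
    fun A A' h => ⟨sep A A', mem_insert_of_mem _ (mem_insert_of_mem _ ⟨(A, A'), rfl⟩), hsep A A' h⟩⟩
  rintro f (rfl | rfl | ⟨⟨A, A'⟩, rfl⟩)
  · exact hz
  · rwa [AddCircle.coe_add_period]
  · exact hsepex A A'

end

section Measure

variable {X : Type*} [MeasurableSpace X]

lemma mem_suppSet_iff {μ : ProbabilityMeasure X} {x : X} :
    x ∈ suppSet μ ↔ (μ : Measure X) {x} ≠ 0 :=
  ProbabilityMeasure.null_iff_toMeasure_null μ {x} |>.not

variable [MeasurableSingletonClass X]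

lemma Pfin.exists_finset_measure_compl_eq_zero (μ : Pfin X) :
    ∃ S : Finset X, (μ.1 : Measure X) (↑S)ᶜ = 0 := by
  obtain ⟨S, hS⟩ := μ.2
  refine ⟨S, (prob_compl_eq_zero_iff S.measurableSet).2 ?_⟩
  rw [← ProbabilityMeasure.ennreal_coeFn_eq_coeFn_toMeasure, hS, ENNReal.coe_one]

lemma Pfin.finite_suppSet (μ : Pfin X) : (suppSet μ.1).Finite := by
  obtain ⟨S, hS⟩ := Pfin.exists_finset_measure_compl_eq_zero μ
  refine S.finite_toSet.subset fun x hx => ?_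
  by_contra hxS
  exact mem_suppSet_iff.1 hx (measure_mono_null (singleton_subset_iff.2 hxS) hS)

lemma Pfin.exists_mem_suppSet_of_ne_zero (μ : Pfin X) {G : Set X} (hG : (μ.1 : Measure X) G ≠ 0) :
    ∃ x ∈ G, x ∈ suppSet μ.1 := by
  obtain ⟨S, hS⟩ := Pfin.exists_finset_measure_compl_eq_zero μ
  by_contra! h
  have hGS : (μ.1 : Measure X) (⋃ x ∈ G ∩ S, {x}) = 0 :=
    (measure_biUnion_null_iff (S.finite_toSet.inter_of_right G).countable).2 fun x hx => by
      simpa [mem_suppSet_iff] using h x hx.1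
  refine hG (measure_mono_null (fun x hxG => ?_) (measure_union_null hGS hS))
  by_cases hxS : x ∈ S
  · exact Or.inl (mem_biUnion ⟨hxG, hxS⟩ rfl)
  · exact Or.inr hxS

lemma Pfin.eventually_exists_mem_suppSet [TopologicalSpace X] [OpensMeasurableSpace X]
    [HasOuterApproxClosed X] {μ₀ : Pfin X} {w : X} (hw : w ∈ suppSet μ₀.1) {G : Set X}
    (hG : G ∈ 𝓝 w) : ∀ᶠ μ in 𝓝 μ₀, ∃ x ∈ G, x ∈ suppSet μ.1 := by
  obtain ⟨U, hUG, hU, hwU⟩ := mem_nhds_iff.1 hG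
  have hpos : 0 < (μ₀.1 : Measure X) U := pos_iff_ne_zero.2 fun h =>
    mem_suppSet_iff.1 hw (measure_mono_null (singleton_subset_iff.2 hwU) h)
  have hle := ProbabilityMeasure.le_liminf_measure_open_of_tendsto
    (continuous_subtype_val.tendsto μ₀) hU
  filter_upwards [eventually_lt_of_lt_liminf (hpos.trans_le hle)] with μ hμ
  obtain ⟨x, hxU, hx⟩ := Pfin.exists_mem_suppSet_of_ne_zero μ hμ.ne'
  exact ⟨x, hUG hxU, hx⟩

end Measure

lemma eventually_excludedBy {μ₀ : Pfin S1} {x : S1} (hx : ExcludedBy r (suppSet μ₀.1) x) :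
    ∀ᶠ μ in 𝓝 μ₀, ExcludedBy r (suppSet μ.1) x := by
  obtain ⟨θ, hθ, hθx⟩ := hx
  have hG : {q : S1 | r < dist q x} ∈ 𝓝 θ :=
    (isOpen_lt continuous_const (continuous_id.dist continuous_const)).mem_nhds hθx
  filter_upwards [Pfin.eventually_exists_mem_suppSet hθ hG] with μ ⟨q, hq, hqμ⟩
  exact ⟨q, hqμ, hq⟩

lemma eventually_arcsCountM_le (μ₀ : Pfin S1) :
    ∀ᶠ μ in 𝓝 μ₀, μ ∈ VRm r → arcsCountM r μ₀ ≤ arcsCountM r μ := by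
  set Θ₀ := suppSet μ₀.1
  rcases {A | IsArc r Θ₀ A}.eq_empty_or_nonempty with h | ⟨A₀, hA₀⟩
  · simp [arcsCountM, arcsCount, Θ₀, h]
  obtain ⟨z, hz⟩ := IsArc.exists_excluded hA₀
  have hlift : ∀ A : {A // IsArc r Θ₀ A},
      ∃ u ∈ Ico z (z + 2 * Real.pi), (u : S1) ∈ A.1 ∩ Θ₀ := fun A => by
    obtain ⟨w, hw⟩ := A.2.2.1
    obtain ⟨u, hu, rfl⟩ := exists_lift_mem_Ico (z := z) w
    exact ⟨u, hu, hw⟩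
  choose u hu huA using hlift
  have hΘ₀ := Pfin.finite_suppSet μ₀
  have : Finite {A // IsArc r Θ₀ A} := (finite_setOf_isArc hz hΘ₀).to_subtype
  obtain ⟨F, hF, hzF, hz2F, hFex, hsep⟩ := exists_finite_separating hz hΘ₀ hu fun A => (huA A).1
  have huF : ∀ A, u A ∉ F := fun A hA => A.2.2.2.1 _ (huA A).1 (hFex _ hA)
  have hnear : ∀ A, ((↑) : ℝ → S1) '' {t | ∀ f ∈ F, f ≤ t ↔ f ≤ u A} ∈ 𝓝 (u A : S1) := fun A =>
    QuotientAddGroup.isOpenMap_coe.image_mem_nhds (eventually_forall_le_iff_le hF (huF A))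
  filter_upwards [(eventually_all_finite hF).2 fun f hf => eventually_excludedBy (hFex f hf),
    eventually_all.2 fun A => Pfin.eventually_exists_mem_suppSet (huA A).2 (hnear A)]
    with μ hFμ hAμ hμ
  choose x hx hxμ using hAμ
  choose t ht htx using hx
  have hwin : ∀ A, t A ∈ Ico z (z + 2 * Real.pi) := fun A =>
    ⟨(ht A z hzF).2 (hu A).1, not_le.1 fun h => not_le.2 (hu A).2 ((ht A _ hz2F).1 h)⟩
  have hdiam : ∀ x ∈ suppSet μ.1, ∀ y ∈ suppSet μ.1, dist x y ≤ r := fun x hx y hy =>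
    (dist_le_diam_of_mem isBounded_of_compactSpace hx hy).trans hμ
  refine (Nat.card_coe_set_eq _).ge.trans (card_le_arcsCount (hFμ z hzF) (Pfin.finite_suppSet μ)
    hdiam t hwin (fun A => htx A ▸ hxμ A) fun A A' hAA' => ?_)
  obtain ⟨s, hsF, hs⟩ := hsep A A' hAA'
  exact ⟨s, mem_uIcc_of_le_iff_le hs (ne_of_mem_of_not_mem hsF (huF A))
    (ne_of_mem_of_not_mem hsF (huF A')) (ht A s hsF) (ht A' s hsF), hFμ s hsF⟩

theorem lowerSemicontinuous_arcsCountM (r : ℝ) :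
    LowerSemicontinuous fun μ : VRm r => arcsCountM r μ := by
  intro μ₀ y hy
  filter_upwards [(continuous_subtype_val.tendsto μ₀).eventually
    (eventually_arcsCountM_le (r := r) μ₀.1)] with μ hμ
  exact hy.trans_le (hμ μ.2)

end VRArcs

theorem W_isClosed_general (r : ℝ) (k : ℕ) :
    IsClosed {μ : ↥(VRm r) | (μ : Pfin S1) ∈ W r k} := by
  convert (VRArcs.lowerSemicontinuous_arcsCountM r).isClosed_preimage (2 * k + 1) using 1
  ext μ
  simp [W]

/-- For every `r ∈ [0,π)` and every `k ≥ 0`, the set `W_{2k+1}(r)`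
is closed in `VRm(S¹;r)`. -/
theorem W_isClosed (r : ℝ) (hr0 : 0 ≤ r) (hrπ : r < Real.pi) (k : ℕ) :
    IsClosed {μ : ↥(VRm r) | (μ : Pfin S1) ∈ W r k} :=
  W_isClosed_general r k
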